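/- arXiv:2307.03176 — 7 statements merged into one kernel-verified Lean document; each statement's English description precedes it below -/
import Mathlib

section
/- Let a > 0, α > 0, ν > 0 and λ > 0 be real numbers, and define X = sqrt((aα − aν + λν)² + 4aλν²), q = (X − aα + (a − λ)ν)/(2ν) and q̂ = (X + aα − (a + λ)ν)/(2aλ). Then q > 0, q̂ > 0, and the pair (q, q̂) satisfies the saddle-point equations q = aν/(ν + a·q̂) and q̂ = α/(λ + q). -/
/-! With `D = aα - aν + λν` we have `2νq = X - D` and `2λ(ν + a q̂) = X + D`, so the first
equation is `X² - D² = 4aλν²`, the defining identity of `X`. Likewise `2aλ q̂ = X + E` and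
`2ν(λ + q) = X - E` with `E = aα - aν - λν`, and `X² - E² = 4aλνα` gives the second.
Both differences of squares are positive, so `X > D` and `X > -E`, which are the positivity
claims. -/

/-- Replica saddle-point equations for feature-subsampled ridge regression on
equicorrelated data: the explicit pair `(q, q̂)` is positive and solves the system. -/
theorem stmt_0 (a α ν lam : ℝ) (ha : 0 < a) (hα : 0 < α) (hν : 0 < ν) (hlam : 0 < lam) :
    let X := Real.sqrt ((a * α - a * ν + lam * ν) ^ 2 + 4 * a * lam * ν ^ 2)
    let q := (X - a * α + (a - lam) * ν) / (2 * ν)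
    let qhat := (X + a * α - (a + lam) * ν) / (2 * a * lam)
    0 < q ∧ 0 < qhat ∧ q = a * ν / (ν + a * qhat) ∧ qhat = α / (lam + q) := by
  intro X q qhat
  have hX : X ^ 2 = (a * α - a * ν + lam * ν) ^ 2 + 4 * a * lam * ν ^ 2 :=
    Real.sq_sqrt (by positivity)
  have hq : 0 < q := by
    have hD : a * α - a * ν + lam * ν < X :=
      Real.lt_sqrt_of_sq_lt (lt_add_of_pos_right _ (by positivity))
    exact div_pos (by linarith) (by positivity)
  have hqhat : 0 < qhat := by
    have hgap : 0 < 4 * a * lam * ν * α := by positivity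
    have hE : (a + lam) * ν - a * α < X := Real.lt_sqrt_of_sq_lt (by linear_combination hgap)
    exact div_pos (by linarith) (by positivity)
  refine ⟨hq, hqhat, eq_div_of_mul_eq (by positivity) ?_, eq_div_of_mul_eq (by positivity) ?_⟩
  · simp only [q, qhat]
    field_simp
    linear_combination hX
  · simp only [q, qhat]
    field_simp
    linear_combination hX
end

section
/- Let a > 0, α > 0, ν > 0 and λ > 0 be real numbers. Then the system of equations q = aν/(ν + a·q̂) and q̂ = α/(λ + q) has exactly one solution (q, q̂) with q > 0, namely q = (X − aα + (a − λ)ν)/(2ν) and q̂ = (X + aα − (a + λ)ν)/(2aλ) where X = sqrt((aα − aν + λν)² + 4aλν²). -/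
/-!
Eliminating `q̂ = α/(λ + q)` turns the system into the quadratic
`ν q² + (aα − aν + λν) q = aλν`, whose constant term has the sign that leaves exactly one
positive root. Substituting that root back gives the formula for `q̂`.
-/

theorem pos_and_quadratic_eq_iff_eq_root {A B C : ℝ} (hA : 0 < A) (hC : 0 < C) (x : ℝ) :
    0 < x ∧ A * x ^ 2 + B * x = C ↔ x = (√(B ^ 2 + 4 * A * C) - B) / (2 * A) := by
  have hD : 0 ≤ B ^ 2 + 4 * A * C := by positivity
  have hdiscrim : discrim A B (-C) = √(B ^ 2 + 4 * A * C) * √(B ^ 2 + 4 * A * C) := by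
    rw [Real.mul_self_sqrt hD, discrim]; ring
  have hroots := quadratic_eq_zero_iff hA.ne' hdiscrim x
  rw [neg_add_eq_sub] at hroots
  have hB_lt : |B| < √(B ^ 2 + 4 * A * C) := by
    rw [← Real.sqrt_sq_eq_abs]
    exact Real.sqrt_lt_sqrt (sq_nonneg B) (by linarith [mul_pos hA hC])
  obtain ⟨hneg_lt, hlt⟩ := abs_lt.mp hB_lt
  constructor
  · rintro ⟨hx, hquad⟩
    refine (hroots.mp (by linear_combination hquad)).resolve_right fun hx' => ?_
    have : (-B - √(B ^ 2 + 4 * A * C)) / (2 * A) < 0 :=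
      div_neg_of_neg_of_pos (by linarith) (by positivity)
    linarith
  · intro hx
    refine ⟨hx ▸ div_pos (by linarith) (by positivity), ?_⟩
    linear_combination hroots.mpr (Or.inl hx)

theorem saddle_point_iff_quadratic {a α ν lam q qhat : ℝ} (ha : 0 ≤ a) (hα : 0 ≤ α)
    (hν : 0 < ν) (hlq : 0 < lam + q) :
    q = a * ν / (ν + a * qhat) ∧ qhat = α / (lam + q) ↔
      qhat = α / (lam + q) ∧ ν * q ^ 2 + (a * α - a * ν + lam * ν) * q = a * lam * ν := by
  refine and_comm.trans (and_congr_right fun hqhat => ?_)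
  have hden : 0 < ν + a * qhat := by
    have : 0 ≤ a * qhat := mul_nonneg ha (hqhat ▸ div_nonneg hα hlq.le)
    linarith
  subst hqhat
  rw [eq_div_iff hden.ne']
  field_simp
  constructor <;> intro h <;> linear_combination h

theorem div_lam_add_pos_root_eq {a α ν lam : ℝ} (ha : 0 < a) (hν : 0 < ν) (hlam : 0 < lam) :
    α / (lam + (√((a * α - a * ν + lam * ν) ^ 2 + 4 * a * lam * ν ^ 2)
        - a * α + (a - lam) * ν) / (2 * ν)) =
      (√((a * α - a * ν + lam * ν) ^ 2 + 4 * a * lam * ν ^ 2)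
        + a * α - (a + lam) * ν) / (2 * a * lam) := by
  set S := a * α - a * ν + lam * ν
  set X := √(S ^ 2 + 4 * a * lam * ν ^ 2)
  have hX2 : X ^ 2 = S ^ 2 + 4 * a * lam * ν ^ 2 := Real.sq_sqrt (by positivity)
  have hS_lt : S < X := by
    refine lt_of_pow_lt_pow_left₀ 2 (Real.sqrt_nonneg _) ?_
    rw [hX2]
    exact lt_add_of_pos_right _ (by positivity)
  have hlq : lam + (X - a * α + (a - lam) * ν) / (2 * ν) = (X - S + 2 * lam * ν) / (2 * ν) := by
    field_simp; ring
  rw [hlq, div_div_eq_mul_div, div_eq_div_iff (by linarith [mul_pos hlam hν]) (by positivity)]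
  -- `(X - S + 2λν)(X + S - 2λν) = X² - (S - 2λν)² = 4aαλν`
  linear_combination -hX2

/-- The replica saddle-point system `q = aν/(ν + a q̂)`, `q̂ = α/(λ + q)` has exactly one
solution with `q > 0`, given by the explicit formulas involving
`X = √((aα − aν + λν)² + 4aλν²)`. -/
theorem stmt_1 (a α ν lam : ℝ) (ha : 0 < a) (hα : 0 < α) (hν : 0 < ν) (hlam : 0 < lam) :
    ∀ q qhat : ℝ,
      (0 < q ∧ q = a * ν / (ν + a * qhat) ∧ qhat = α / (lam + q)) ↔
      (q = (Real.sqrt ((a * α - a * ν + lam * ν) ^ 2 + 4 * a * lam * ν ^ 2)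
              - a * α + (a - lam) * ν) / (2 * ν) ∧
       qhat = (Real.sqrt ((a * α - a * ν + lam * ν) ^ 2 + 4 * a * lam * ν ^ 2)
              + a * α - (a + lam) * ν) / (2 * a * lam)) := by
  intro q qhat
  have hroot : 0 < q ∧ ν * q ^ 2 + (a * α - a * ν + lam * ν) * q = a * lam * ν ↔
      q = (√((a * α - a * ν + lam * ν) ^ 2 + 4 * a * lam * ν ^ 2)
        - a * α + (a - lam) * ν) / (2 * ν) := by
    convert pos_and_quadratic_eq_iff_eq_root hν (by positivity : 0 < a * lam * ν) q using 4
    rw [show 4 * ν * (a * lam * ν) = 4 * a * lam * ν ^ 2 by ring]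
    ring
  constructor
  · rintro ⟨hq, hsystem⟩
    obtain ⟨hqhat, hquad⟩ :=
      (saddle_point_iff_quadratic ha.le hα.le hν (by linarith)).mp hsystem
    have hq_eq := hroot.mp ⟨hq, hquad⟩
    exact ⟨hq_eq, hqhat.trans (hq_eq ▸ div_lam_add_pos_root_eq ha hν hlam)⟩
  · rintro ⟨hq_eq, hqhat_eq⟩
    obtain ⟨hq, hquad⟩ := hroot.mpr hq_eq
    have hqhat : qhat = α / (lam + q) :=
      hqhat_eq.trans (hq_eq ▸ div_lam_add_pos_root_eq ha hν hlam).symm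
    exact ⟨hq, (saddle_point_iff_quadratic ha.le hα.le hν (by linarith)).mpr ⟨hqhat, hquad⟩⟩
end

section
/- Fix real numbers a > 0, α > 0, ν > 0. For λ > 0 set X(λ) = sqrt((aα − aν + λν)² + 4aλν²), q̂(λ) = (X(λ) + aα − (a + λ)ν)/(2aλ), and S(λ) = q̂(λ)/(ν + a·q̂(λ)). Then the limit of S(λ) as λ → 0⁺ equals 2α/(a·(α + ν + |α − ν|)). -/
/-!
Writing `X` for the square root in `q̂` and `B = aα − aν − λν`, the numerator of `q̂` is `X + B`
and `X² − B² = 4aαλν`. Rationalising gives `q̂ = 2αν/(X − B)`, hence `S = 2α/(X − B + 2aα)`,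
an expression that no longer has the removable singularity at `λ = 0` and is continuous there;
at `λ = 0` it equals `2α/(|aα − aν| − (aα − aν) + 2aα)`.
-/

/-- Conjugate order parameter of the replica saddle-point equations. -/
noncomputable def qhatFun (a α ν lam : ℝ) : ℝ :=
  (Real.sqrt ((a * α - a * ν + lam * ν) ^ 2 + 4 * a * lam * ν ^ 2)
      + a * α - (a + lam) * ν) / (2 * a * lam)

/-- Reduced resolvent factor `S(λ) = q̂(λ)/(ν + a·q̂(λ))`. -/
noncomputable def Sfun (a α ν lam : ℝ) : ℝ :=
  qhatFun a α ν lam / (ν + a * qhatFun a α ν lam)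

noncomputable def Xfun (a α ν lam : ℝ) : ℝ :=
  Real.sqrt ((a * α - a * ν + lam * ν) ^ 2 + 4 * a * lam * ν ^ 2)

section

variable {a α ν lam : ℝ}

lemma qhatFun_eq_Xfun : qhatFun a α ν lam =
    (Xfun a α ν lam + (a * α - a * ν - lam * ν)) / (2 * a * lam) := by
  rw [qhatFun, Xfun]
  ring_nf

lemma Xfun_sq (ha : 0 ≤ a) (hl : 0 ≤ lam) :
    Xfun a α ν lam ^ 2 = (a * α - a * ν - lam * ν) ^ 2 + 4 * a * α * lam * ν := by
  rw [Xfun, Real.sq_sqrt (by positivity)]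
  ring

lemma sub_lt_Xfun (ha : 0 < a) (hα : 0 < α) (hν : 0 < ν) (hl : 0 < lam) :
    a * α - a * ν - lam * ν < Xfun a α ν lam := by
  have hsq : (a * α - a * ν - lam * ν) ^ 2 < Xfun a α ν lam ^ 2 := by
    rw [Xfun_sq ha.le hl.le]
    have : 0 < 4 * a * α * lam * ν := by positivity
    linarith
  exact (le_abs_self _).trans_lt (abs_lt_of_sq_lt_sq hsq (Real.sqrt_nonneg _))

lemma qhatFun_eq_div (ha : 0 < a) (hα : 0 < α) (hν : 0 < ν) (hl : 0 < lam) :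
    qhatFun a α ν lam = 2 * α * ν / (Xfun a α ν lam - (a * α - a * ν - lam * ν)) := by
  have hXB := sub_pos.2 (sub_lt_Xfun ha hα hν hl)
  rw [qhatFun_eq_Xfun, div_eq_div_iff (by positivity) hXB.ne']
  linear_combination Xfun_sq (α := α) (ν := ν) ha.le hl.le

lemma Sfun_eq_div (ha : 0 < a) (hα : 0 < α) (hν : 0 < ν) (hl : 0 < lam) :
    Sfun a α ν lam = 2 * α / (Xfun a α ν lam - (a * α - a * ν - lam * ν) + 2 * a * α) := by
  have hXB := sub_pos.2 (sub_lt_Xfun ha hα hν hl)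
  rw [Sfun, qhatFun_eq_div ha hα hν hl]
  generalize Xfun a α ν lam - (a * α - a * ν - lam * ν) = D at hXB ⊢
  field_simp

lemma Xfun_zero : Xfun a α ν 0 = |a * α - a * ν| := by
  simp [Xfun, Real.sqrt_sq_eq_abs]

end

/-- Ridgeless limit of the reduced resolvent factor:
`S(λ) → 2α/(a(α + ν + |α − ν|))` as `λ → 0⁺`. -/
theorem stmt_3 (a α ν : ℝ) (ha : 0 < a) (hα : 0 < α) (hν : 0 < ν) :
    Filter.Tendsto (fun lam : ℝ => Sfun a α ν lam)
      (nhdsWithin 0 (Set.Ioi 0)) (nhds (2 * α / (a * (α + ν + |α - ν|)))) := by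
  set g : ℝ → ℝ := fun lam => 2 * α / (Xfun a α ν lam - (a * α - a * ν - lam * ν) + 2 * a * α)
  have hden : 0 < Xfun a α ν 0 - (a * α - a * ν - 0 * ν) + 2 * a * α := by
    rw [Xfun_zero]
    linarith [le_abs_self (a * α - a * ν), mul_pos ha hα]
  have hcont : ContinuousAt g 0 := by
    unfold g Xfun
    fun_prop (disch := exact hden.ne')
  have hg0 : g 0 = 2 * α / (a * (α + ν + |α - ν|)) := by
    simp only [g, Xfun_zero, ← mul_sub, abs_mul, abs_of_pos ha]
    ring_nf
  rw [← hg0]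
  refine (hcont.tendsto.mono_left nhdsWithin_le_nhds).congr' ?_
  filter_upwards [self_mem_nhdsWithin] with lam hl using (Sfun_eq_div ha hα hν hl).symm
end

section
/- Fix real numbers a > 0, b ≥ 0, q̂ > 0, and ν ∈ (0, 1]. For each M ∈ ℕ let N(M) ∈ ℕ with 1 ≤ N(M) ≤ M and N(M)/M → ν as M → ∞, and define the N(M)×N(M) real matrix Σ̃_M = (M/N(M))·(a·I + b·𝟙𝟙ᵀ), where 𝟙 is the all-ones vector in ℝ^{N(M)} and I the identity. Then (1/M)·tr[((I + q̂·Σ̃_M)⁻¹·Σ̃_M)²] → a²ν/(ν + a·q̂)² as M → ∞. -/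
/-!
The matrix `Σ̃ = (M/N)(a I + b 𝟙𝟙ᵀ)` is diagonal in the splitting `ℝᴺ = 𝟙^⊥ ⊕ ℝ𝟙`, with
eigenvalue `x = aM/N` of multiplicity `N - 1` and `w = (a + bN)M/N` of multiplicity one. Hence
`tr[((I + q̂Σ̃)⁻¹Σ̃)²] = (N - 1) g(x)² + g(w)²` with `g t = t/(1 + q̂t) ≤ 1/q̂`. After division by
`M` the single outlying eigenvalue contributes `O(1/M)`, while
`(N - 1)/M · g(x)² = (N/M - 1/M) · (a/(N/M + q̂a))² → ν a²/(ν + q̂a)²`.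
-/

/-- The rescaled covariance `Σ̃ = (M/N)·(a·I + b·𝟙𝟙ᵀ)` of a subsampled set of `n = N(M)`
equicorrelated features. -/
noncomputable def sigmaTilde (a b : ℝ) (M n : ℕ) : Matrix (Fin n) (Fin n) ℝ :=
  ((M : ℝ) / (n : ℝ)) •
    (a • (1 : Matrix (Fin n) (Fin n) ℝ) + b • Matrix.of (fun _ _ => (1 : ℝ)))

open Matrix Filter Topology

namespace Matrix

variable {ι K : Type*} [Fintype ι] [DecidableEq ι] [Field K]

def onesProj : Matrix ι ι K := (Fintype.card ι : K)⁻¹ • of fun _ _ => 1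

/-- The matrix acting as `x` on the orthogonal complement of `𝟙` and as `w` on `𝟙`. -/
def onesSpectral (x w : K) : Matrix ι ι K := x • (1 - onesProj) + w • onesProj

-- No hypothesis on `card ι`: when it vanishes in `K`, `onesProj = 0`.
lemma onesProj_mul_self : (onesProj : Matrix ι ι K) * onesProj = onesProj := by
  ext i j
  rcases eq_or_ne (Fintype.card ι : K) 0 with h | h
  · simp [onesProj, h]
  · simp [onesProj, mul_apply]
    field_simp

lemma onesSpectral_mul (x w u v : K) :
    (onesSpectral x w : Matrix ι ι K) * onesSpectral u v = onesSpectral (x * u) (w * v) := by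
  simp only [onesSpectral, add_mul, mul_add, smul_mul_assoc, mul_smul_comm, sub_mul,
    mul_sub, one_mul, mul_one, onesProj_mul_self, sub_self, smul_zero]
  module

lemma onesSpectral_one_one : (onesSpectral 1 1 : Matrix ι ι K) = 1 := by
  simp [onesSpectral]

lemma smul_onesSpectral (c x w : K) :
    c • (onesSpectral x w : Matrix ι ι K) = onesSpectral (c * x) (c * w) := by
  simp only [onesSpectral, smul_add, smul_smul]

lemma onesSpectral_add (x w u v : K) :
    (onesSpectral x w : Matrix ι ι K) + onesSpectral u v = onesSpectral (x + u) (w + v) := by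
  simp only [onesSpectral, add_smul]
  abel

lemma one_add_smul_onesSpectral (q x w : K) :
    1 + q • (onesSpectral x w : Matrix ι ι K) = onesSpectral (1 + q * x) (1 + q * w) := by
  rw [← onesSpectral_one_one, smul_onesSpectral, onesSpectral_add]

lemma inv_onesSpectral {x w : K} (hx : x ≠ 0) (hw : w ≠ 0) :
    (onesSpectral x w : Matrix ι ι K)⁻¹ = onesSpectral x⁻¹ w⁻¹ := by
  apply inv_eq_right_inv
  rw [onesSpectral_mul, mul_inv_cancel₀ hx, mul_inv_cancel₀ hw, onesSpectral_one_one]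

lemma trace_onesSpectral (h : (Fintype.card ι : K) ≠ 0) (x w : K) :
    trace (onesSpectral x w : Matrix ι ι K) = (Fintype.card ι - 1) * x + w := by
  have : trace (onesProj : Matrix ι ι K) = 1 := by
    simp [onesProj, trace, h]
  simp only [onesSpectral, trace_add, trace_smul, trace_sub, trace_one, this, smul_eq_mul]
  ring

lemma smul_one_add_smul_allOnes (h : (Fintype.card ι : K) ≠ 0) (a b : K) :
    a • (1 : Matrix ι ι K) + b • of (fun _ _ => 1) =
      onesSpectral a (a + Fintype.card ι * b) := by
  have : (of fun _ _ => 1 : Matrix ι ι K) = (Fintype.card ι : K) • onesProj := by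
    rw [onesProj, smul_smul, mul_inv_cancel₀ h, one_smul]
  rw [this, onesSpectral]
  module

lemma resolvent_mul_onesSpectral {q x w : K} (hx : 1 + q * x ≠ 0) (hw : 1 + q * w ≠ 0) :
    (1 + q • onesSpectral x w : Matrix ι ι K)⁻¹ * onesSpectral x w =
      onesSpectral (x / (1 + q * x)) (w / (1 + q * w)) := by
  rw [one_add_smul_onesSpectral, inv_onesSpectral hx hw, onesSpectral_mul]
  simp only [div_eq_inv_mul]

end Matrix

lemma sigmaTilde_eq_onesSpectral (a b : ℝ) (M : ℕ) {n : ℕ} (hn : (n : ℝ) ≠ 0) :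
    sigmaTilde a b M n = onesSpectral (M / n * a) (M / n * (a + n * b)) := by
  rw [sigmaTilde, smul_one_add_smul_allOnes (by simpa using hn), smul_onesSpectral,
    Fintype.card_fin]

lemma div_one_add_mul_le_inv {q x : ℝ} (hq : 0 < q) (hx : 0 ≤ x) : x / (1 + q * x) ≤ q⁻¹ := by
  rw [div_le_iff₀ (by positivity)]
  field_simp
  linarith

lemma tendsto_inv_mul_sq_div_one_add_mul {q : ℝ} (hq : 0 < q) {w : ℕ → ℝ}
    (hw : ∀ᶠ M in atTop, 0 ≤ w M) :
    Tendsto (fun M : ℕ => (M : ℝ)⁻¹ * (w M / (1 + q * w M)) ^ 2) atTop (𝓝 0) := by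
  refine tendsto_inv_atTop_nhds_zero_nat.zero_mul_isBoundedUnder_le
    (isBoundedUnder_of_eventually_le (a := q⁻¹ ^ 2) ?_)
  filter_upwards [hw] with M hM
  have h0 : 0 ≤ w M / (1 + q * w M) := by positivity
  simpa [abs_of_nonneg h0] using pow_le_pow_left₀ h0 (div_one_add_mul_le_inv hq hM) 2

lemma trace_sq_resolvent_mul_sigmaTilde {a b q : ℝ} (ha : 0 ≤ a) (hb : 0 ≤ b) (hq : 0 ≤ q)
    (M : ℕ) {n : ℕ} (hn : (n : ℝ) ≠ 0) :
    trace (((1 + q • sigmaTilde a b M n)⁻¹ * sigmaTilde a b M n) ^ 2) =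
      (n - 1) * (M / n * a / (1 + q * (M / n * a))) ^ 2 +
        (M / n * (a + n * b) / (1 + q * (M / n * (a + n * b)))) ^ 2 := by
  rw [sigmaTilde_eq_onesSpectral a b M hn, resolvent_mul_onesSpectral (by positivity)
    (by positivity), sq, onesSpectral_mul, trace_onesSpectral (by simpa using hn),
    Fintype.card_fin, sq, sq]

theorem stmt_6_general (a b qhat ν : ℝ) (ha : 0 < a) (hb : 0 ≤ b) (hq : 0 < qhat)
    (hν : ν ∈ Set.Ioc (0 : ℝ) 1) (N : ℕ → ℕ)
    (hNlim : Filter.Tendsto (fun M : ℕ => (N M : ℝ) / (M : ℝ)) Filter.atTop (nhds ν)) :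
    Filter.Tendsto
      (fun M : ℕ =>
        (1 / (M : ℝ)) *
          Matrix.trace (((1 + qhat • sigmaTilde a b M (N M))⁻¹ * sigmaTilde a b M (N M)) ^ 2))
      Filter.atTop (nhds (a ^ 2 * ν / (ν + a * qhat) ^ 2)) := by
  obtain ⟨hν0, -⟩ := hν
  set w : ℕ → ℝ := fun M => M / N M * (a + N M * b)
  have hsplit : ∀ᶠ M : ℕ in atTop,
      (N M / M - (M : ℝ)⁻¹) * (a / (N M / M + qhat * a)) ^ 2 +
          (M : ℝ)⁻¹ * (w M / (1 + qhat * w M)) ^ 2 =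
        1 / M * trace (((1 + qhat • sigmaTilde a b M (N M))⁻¹ * sigmaTilde a b M (N M)) ^ 2) := by
    filter_upwards [hNlim.eventually (lt_mem_nhds hν0)] with M hM
    obtain ⟨hn, hM⟩ : 0 < (N M : ℝ) ∧ 0 < (M : ℝ) :=
      (div_pos_iff.mp hM).resolve_right fun h => (Nat.cast_nonneg _).not_gt h.1
    rw [trace_sq_resolvent_mul_sigmaTilde ha.le hb hq.le M hn.ne']
    simp only [w]
    field_simp
  have hfirst : Tendsto (fun M : ℕ => ((N M : ℝ) / M - (M : ℝ)⁻¹) * (a / (N M / M + qhat * a)) ^ 2)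
      atTop (𝓝 ((ν - 0) * (a / (ν + qhat * a)) ^ 2)) :=
    (hNlim.sub tendsto_inv_atTop_nhds_zero_nat).mul
      ((tendsto_const_nhds.div (hNlim.add tendsto_const_nhds) (by positivity)).pow 2)
  have hsecond := tendsto_inv_mul_sq_div_one_add_mul hq (w := w)
    (Eventually.of_forall fun M => by simp only [w]; positivity)
  convert (hfirst.add hsecond).congr' hsplit using 2
  field_simp
  ring

/-- Large-`M` limit of the squared resolvent trace appearing in the overlap parameter `γ`:
`(1/M)·tr[((I + q̂Σ̃)⁻¹Σ̃)²] → a²ν/(ν + a·q̂)²`. -/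
theorem stmt_6 (a b qhat ν : ℝ) (ha : 0 < a) (hb : 0 ≤ b) (hq : 0 < qhat)
    (hν : ν ∈ Set.Ioc (0 : ℝ) 1) (N : ℕ → ℕ)
    (hN1 : ∀ M, 1 ≤ M → 1 ≤ N M) (hN2 : ∀ M, N M ≤ M)
    (hNlim : Filter.Tendsto (fun M : ℕ => (N M : ℝ) / (M : ℝ)) Filter.atTop (nhds ν)) :
    Filter.Tendsto
      (fun M : ℕ =>
        (1 / (M : ℝ)) *
          Matrix.trace (((1 + qhat • sigmaTilde a b M (N M))⁻¹ * sigmaTilde a b M (N M)) ^ 2))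
      Filter.atTop (nhds (a ^ 2 * ν / (ν + a * qhat) ^ 2)) :=
  stmt_6_general a b qhat ν ha hb hq hν N hNlim
end

section
/- Fix s > 0, c ∈ [0,1), ω ≥ 0, ζ ≥ 0, η ≥ 0, ν ∈ (0,1], and α > 0 with α ≠ ν, and set a = s(1−c) + ω². For λ > 0 define X(λ) = sqrt((aα − aν + λν)² + 4aλν²), q̂(λ) = (X(λ) + aα − (a + λ)ν)/(2aλ), S(λ) = q̂(λ)/(ν + a·q̂(λ)), γ(λ) = a²νS(λ)²/α, I⁰(λ) = s(1−c)·(1 − 2s(1−c)νS(λ) + a s(1−c) ν S(λ)²), and E⁰(λ) = (I⁰(λ) + γ(λ)ζ² + η²)/(1 − γ(λ)). Then as λ → 0⁺, E⁰(λ) converges to: (s(1−c)·ν/(ν−α))·(1 + s(1−c)α(α − 2ν)/(ν·a)) + (αζ² + νη²)/(ν − α) if α < ν, and (s(1−c)·α/(α−ν))·(1 − s(1−c)ν/a) + (νζ² + αη²)/(α − ν) if α > ν. -/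
/-- Overlap parameter `γ(λ) = a²νS(λ)²/α`. -/
noncomputable def gammaFun (a α ν lam : ℝ) : ℝ :=
  a ^ 2 * ν * Sfun a α ν lam ^ 2 / α

/-
As λ → 0⁺ the discriminant X(λ) tends to |a(α − ν)|, so after rationalising, S(λ) tends to
min(α, ν)/(aν). The error E⁰ is a rational function of S whose denominator 1 − γ tends to
1 − min(α, ν)/max(α, ν) ≠ 0, so the limit is that function evaluated at min(α, ν)/(aν),
computed separately for α < ν and α > ν.
-/

open Filter Topology

section

variable {a α ν : ℝ}

/-- Rationalised form of `S`, which unlike the definition stays continuous at `λ = 0`. -/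
lemma Sfun_eq_sub_sqrt (ha : 0 < a) (hν : 0 < ν) {lam : ℝ} (hlam : 0 < lam) :
    Sfun a α ν lam = 1 / a -
      (Real.sqrt ((a * α - a * ν + lam * ν) ^ 2 + 4 * a * lam * ν ^ 2)
        - (a * α - a * ν + lam * ν)) / (2 * a ^ 2 * ν) := by
  set u := a * α - a * ν + lam * ν with hu
  set X := Real.sqrt (u ^ 2 + 4 * a * lam * ν ^ 2) with hX
  have hX2 : X ^ 2 = u ^ 2 + 4 * a * lam * ν ^ 2 := Real.sq_sqrt (by positivity)
  have hXu_pos : 0 < X + u := by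
    have habs : |u| < X := by
      rw [hX, ← Real.sqrt_sq_eq_abs]
      have : 0 < 4 * a * lam * ν ^ 2 := by positivity
      exact Real.sqrt_lt_sqrt (sq_nonneg u) (by linarith)
    linarith [neg_abs_le u]
  have hq : qhatFun a α ν lam = (X + u - 2 * lam * ν) / (2 * a * lam) := by
    rw [qhatFun, hX, hu]; ring
  have hden : ν + a * qhatFun a α ν lam = (X + u) / (2 * lam) := by
    rw [hq]; field_simp; ring
  rw [Sfun, hden, hq]
  field_simp
  linear_combination hX2

lemma tendsto_Sfun (ha : 0 < a) (hν : 0 < ν) :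
    Tendsto (Sfun a α ν) (𝓝[>] 0) (𝓝 (min α ν / (a * ν))) := by
  have hcont : Continuous fun lam : ℝ => 1 / a -
      (Real.sqrt ((a * α - a * ν + lam * ν) ^ 2 + 4 * a * lam * ν ^ 2)
        - (a * α - a * ν + lam * ν)) / (2 * a ^ 2 * ν) := by fun_prop
  have hlim : 1 / a - (|a * α - a * ν| - (a * α - a * ν)) / (2 * a ^ 2 * ν)
      = min α ν / (a * ν) := by
    rcases le_total α ν with h | h
    · rw [abs_of_nonpos (by nlinarith), min_eq_left h]; field_simp; ring
    · rw [abs_of_nonneg (by nlinarith), min_eq_right h]; field_simp; ring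
  have h0 := (hcont.tendsto 0).mono_left (nhdsWithin_le_nhds (s := Set.Ioi 0))
  simp only [zero_mul, mul_zero, add_zero, Real.sqrt_sq_eq_abs, hlim] at h0
  refine h0.congr' ?_
  filter_upwards [self_mem_nhdsWithin] with lam hlam
  exact (Sfun_eq_sub_sqrt ha hν hlam).symm

end

/-- The error `E⁰` as a function of `S`, with `γ = a²νS²/α`. -/
noncomputable def errorOfS (s c ζ η a α ν S : ℝ) : ℝ :=
  (s * (1 - c) * (1 - 2 * s * (1 - c) * ν * S + a * s * (1 - c) * ν * S ^ 2)
    + a ^ 2 * ν * S ^ 2 / α * ζ ^ 2 + η ^ 2) / (1 - a ^ 2 * ν * S ^ 2 / α)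

section

variable {s c ζ η a α ν : ℝ}

lemma continuousAt_errorOfS {S : ℝ} (hγ : a ^ 2 * ν * S ^ 2 / α ≠ 1) :
    ContinuousAt (errorOfS s c ζ η a α ν) S :=
  ContinuousAt.div (by fun_prop) (by fun_prop) (sub_ne_zero.2 hγ.symm)

lemma gamma_at_min_ne_one (ha : a ≠ 0) (hν : 0 < ν) (hα : 0 < α) (hαν : α ≠ ν) :
    a ^ 2 * ν * (min α ν / (a * ν)) ^ 2 / α ≠ 1 := by
  rcases hαν.lt_or_gt with h | h
  · have hγ : a ^ 2 * ν * (α / (a * ν)) ^ 2 / α = α / ν := by field_simp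
    rw [min_eq_left h.le, hγ]
    exact ((div_lt_one hν).2 h).ne
  · have hγ : a ^ 2 * ν * (ν / (a * ν)) ^ 2 / α = ν / α := by field_simp
    rw [min_eq_right h.le, hγ]
    exact ((div_lt_one hα).2 h).ne

lemma errorOfS_of_lt (ha : a ≠ 0) (hα : 0 < α) (hαν : α < ν) :
    errorOfS s c ζ η a α ν (α / (a * ν)) =
      (s * (1 - c) * ν / (ν - α)) * (1 + s * (1 - c) * α * (α - 2 * ν) / (ν * a))
        + (α * ζ ^ 2 + ν * η ^ 2) / (ν - α) := by
  have hν : ν ≠ 0 := by linarith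
  have hνα : ν - α ≠ 0 := by linarith
  have hγ : 1 - a ^ 2 * ν * (α / (a * ν)) ^ 2 / α = (ν - α) / ν := by field_simp
  rw [errorOfS, hγ]
  field_simp
  ring

lemma errorOfS_of_gt (ha : a ≠ 0) (hν : 0 < ν) (hαν : ν < α) :
    errorOfS s c ζ η a α ν (ν / (a * ν)) =
      (s * (1 - c) * α / (α - ν)) * (1 - s * (1 - c) * ν / a)
        + (ν * ζ ^ 2 + α * η ^ 2) / (α - ν) := by
  have hα : α ≠ 0 := by linarith
  have hαν' : α - ν ≠ 0 := by linarith
  have hγ : 1 - a ^ 2 * ν * (ν / (a * ν)) ^ 2 / α = (α - ν) / α := by field_simp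
  rw [errorOfS, hγ]
  field_simp
  ring

end

theorem stmt_10_general (s c ω ζ η ν α : ℝ) (hs : 0 < s) (hc : c ∈ Set.Ico (0 : ℝ) 1)
    (hν : ν ∈ Set.Ioc (0 : ℝ) 1)
    (hα : 0 < α) (hαν : α ≠ ν) :
    let a := s * (1 - c) + ω ^ 2
    Filter.Tendsto
      (fun lam : ℝ =>
        (s * (1 - c) * (1 - 2 * s * (1 - c) * ν * Sfun a α ν lam
              + a * s * (1 - c) * ν * Sfun a α ν lam ^ 2)
            + gammaFun a α ν lam * ζ ^ 2 + η ^ 2) / (1 - gammaFun a α ν lam))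
      (nhdsWithin 0 (Set.Ioi 0))
      (nhds (if α < ν then
          (s * (1 - c) * ν / (ν - α)) * (1 + s * (1 - c) * α * (α - 2 * ν) / (ν * a))
            + (α * ζ ^ 2 + ν * η ^ 2) / (ν - α)
        else
          (s * (1 - c) * α / (α - ν)) * (1 - s * (1 - c) * ν / a)
            + (ν * ζ ^ 2 + α * η ^ 2) / (α - ν))) := by
  intro a
  have ha : 0 < a := by
    have : 0 < s * (1 - c) := mul_pos hs (by linarith [hc.2])
    positivity
  have hE : Tendsto (fun lam => errorOfS s c ζ η a α ν (Sfun a α ν lam)) (𝓝[>] 0)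
      (𝓝 (errorOfS s c ζ η a α ν (min α ν / (a * ν)))) :=
    (continuousAt_errorOfS (gamma_at_min_ne_one ha.ne' hν.1 hα hαν)).tendsto.comp
      (tendsto_Sfun ha hν.1)
  rcases hαν.lt_or_gt with h | h
  · rw [min_eq_left h.le, errorOfS_of_lt ha.ne' hα h] at hE
    rwa [if_pos h]
  · rw [min_eq_right h.le, errorOfS_of_gt ha.ne' hν.1 h] at hE
    rwa [if_neg h.not_gt]

/-- Ridgeless limit of the `ρ = 0` component of the diagonal generalization error of a
single feature-subsampling ridge predictor on equicorrelated data. -/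
theorem stmt_10 (s c ω ζ η ν α : ℝ) (hs : 0 < s) (hc : c ∈ Set.Ico (0 : ℝ) 1)
    (hω : 0 ≤ ω) (hζ : 0 ≤ ζ) (hη : 0 ≤ η) (hν : ν ∈ Set.Ioc (0 : ℝ) 1)
    (hα : 0 < α) (hαν : α ≠ ν) :
    let a := s * (1 - c) + ω ^ 2
    Filter.Tendsto
      (fun lam : ℝ =>
        (s * (1 - c) * (1 - 2 * s * (1 - c) * ν * Sfun a α ν lam
              + a * s * (1 - c) * ν * Sfun a α ν lam ^ 2)
            + gammaFun a α ν lam * ζ ^ 2 + η ^ 2) / (1 - gammaFun a α ν lam))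
      (nhdsWithin 0 (Set.Ioi 0))
      (nhds (if α < ν then
          (s * (1 - c) * ν / (ν - α)) * (1 + s * (1 - c) * α * (α - 2 * ν) / (ν * a))
            + (α * ζ ^ 2 + ν * η ^ 2) / (ν - α)
        else
          (s * (1 - c) * α / (α - ν)) * (1 - s * (1 - c) * ν / a)
            + (ν * ζ ^ 2 + α * η ^ 2) / (α - ν))) :=
  stmt_10_general s c ω ζ η ν α hs hc hν hα hαν
end

section
/- Fix s > 0, ζ ≥ 0, η ≥ 0, and ν ∈ (0,1], and suppose λ* := (ζ² + η²)/ν + s·(1 − ν)/ν is strictly positive. For λ > 0 and α > 0 define X(λ) = sqrt((sα − sν + λν)² + 4sλν²), q̂(λ) = (X(λ) + sα − (s + λ)ν)/(2sλ), S(λ) = q̂(λ)/(ν + s·q̂(λ)), γ(λ) = s²νS(λ)²/α, I(λ) = s·(1 − 2sνS(λ) + s²νS(λ)²), and the diagonal error E(λ) = (I(λ) + γ(λ)ζ² + η²)/(1 − γ(λ)). Then for every α > 0 the derivative of E with respect to λ vanishes at λ = λ*; in particular the locally optimal regularization λ* is independent of the sample ratio α. -/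
section SaddlePoint

variable {s α ν lam : ℝ}

theorem qhatFun_pos (hs : 0 < s) (hα : 0 < α) (hν : 0 < ν) (hlam : 0 < lam) :
    0 < qhatFun s α ν lam := by
  have habs : |s * α - (s + lam) * ν|
      < Real.sqrt ((s * α - s * ν + lam * ν) ^ 2 + 4 * s * lam * ν ^ 2) := by
    rw [← Real.sqrt_sq_eq_abs]
    apply Real.sqrt_lt_sqrt (sq_nonneg _)
    nlinarith [mul_pos (mul_pos hlam hν) (mul_pos hs hα)]
  have hlower := (abs_lt.mp habs).1
  unfold qhatFun
  exact div_pos (by linarith) (by positivity)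

/-- The quadratic obtained by eliminating `q` from `q = sν/(ν + s q̂)`, `q̂ = α/(λ + q)`. -/
theorem qhatFun_quadratic (hs : 0 < s) (hν : 0 < ν) (hlam : 0 < lam) :
    s * lam * qhatFun s α ν lam ^ 2 + (s * ν + lam * ν - s * α) * qhatFun s α ν lam
      - α * ν = 0 := by
  have hd : 0 ≤ (s * α - s * ν + lam * ν) ^ 2 + 4 * s * lam * ν ^ 2 := by
    have := hs.le; have := hlam.le; positivity
  have hsq := Real.sq_sqrt hd
  unfold qhatFun
  generalize Real.sqrt ((s * α - s * ν + lam * ν) ^ 2 + 4 * s * lam * ν ^ 2) = r at hsq ⊢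
  field_simp
  linear_combination hsq

theorem Sfun_fixedPoint (hs : 0 < s) (hα : 0 < α) (hν : 0 < ν) (hlam : 0 < lam) :
    ν * Sfun s α ν lam * lam + ν * s * Sfun s α ν lam - ν * s ^ 2 * Sfun s α ν lam ^ 2
      - α + α * s * Sfun s α ν lam = 0 := by
  have hq := qhatFun_pos hs hα hν hlam
  have hquad := qhatFun_quadratic (α := α) hs hν hlam
  have hu : 0 < ν + s * qhatFun s α ν lam := by positivity
  unfold Sfun
  field_simp
  linear_combination ν * hquad

theorem Sfun_pos (hs : 0 < s) (hα : 0 < α) (hν : 0 < ν) (hlam : 0 < lam) :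
    0 < Sfun s α ν lam := by
  have hq := qhatFun_pos hs hα hν hlam
  unfold Sfun
  positivity

theorem mul_Sfun_lt_one (hs : 0 < s) (hα : 0 < α) (hν : 0 < ν) (hlam : 0 < lam) :
    s * Sfun s α ν lam < 1 := by
  have hq := qhatFun_pos hs hα hν hlam
  have hu : 0 < ν + s * qhatFun s α ν lam := by positivity
  rw [Sfun, ← mul_div_assoc, div_lt_one hu]
  linarith

theorem gammaFun_lt_one (hs : 0 < s) (hα : 0 < α) (hν : 0 < ν) (hlam : 0 < lam) :
    gammaFun s α ν lam < 1 := by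
  set t := Sfun s α ν lam
  have ht := Sfun_pos hs hα hν hlam
  have hst : 0 < 1 - s * t := sub_pos.mpr (mul_Sfun_lt_one hs hα hν hlam)
  have hprod : 0 < (α - s ^ 2 * ν * t ^ 2) * (1 - s * t) := by
    have key : (α - s ^ 2 * ν * t ^ 2) * (1 - s * t)
        = ν * lam * t + ν * s * t * (1 - s * t) ^ 2 := by
      linear_combination -Sfun_fixedPoint hs hα hν hlam
    rw [key]
    positivity
  rw [gammaFun, div_lt_one hα]
  linarith [(pos_iff_pos_of_mul_pos hprod).mpr hst]

theorem differentiableAt_Sfun (hs : 0 < s) (hα : 0 < α) (hν : 0 < ν) (hlam : 0 < lam) :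
    DifferentiableAt ℝ (Sfun s α ν) lam := by
  have hd : 0 < (s * α - s * ν + lam * ν) ^ 2 + 4 * s * lam * ν ^ 2 := by positivity
  have hq : DifferentiableAt ℝ (qhatFun s α ν) lam := by
    unfold qhatFun
    refine DifferentiableAt.div ?_ (by fun_prop) (by positivity)
    have hsqrt : DifferentiableAt ℝ
        (fun lam => Real.sqrt ((s * α - s * ν + lam * ν) ^ 2 + 4 * s * lam * ν ^ 2)) lam :=
      DifferentiableAt.sqrt (by fun_prop) hd.ne'
    fun_prop
  have hu : 0 < ν + s * qhatFun s α ν lam := by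
    have := qhatFun_pos hs hα hν hlam; positivity
  exact hq.div (by fun_prop) hu.ne'

end SaddlePoint

theorem hasDerivAt_error_zero {s α ν z e t : ℝ} (hα : α ≠ 0)
    (hden : 1 - s ^ 2 * ν * t ^ 2 / α ≠ 0)
    (hfix : t * (z + e + s) - s ^ 2 * ν * t ^ 2 - α + α * s * t = 0) :
    HasDerivAt
      (fun t : ℝ => (s * (1 - 2 * s * ν * t + s ^ 2 * ν * t ^ 2)
        + s ^ 2 * ν * t ^ 2 / α * z + e) / (1 - s ^ 2 * ν * t ^ 2 / α)) 0 t := by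
  have ht2 : HasDerivAt (fun t : ℝ => t ^ 2) (2 * t) t := by
    simpa using hasDerivAt_pow 2 t
  have hnum := (((((hasDerivAt_id t).const_mul (2 * s * ν)).const_sub 1).add
    (ht2.const_mul (s ^ 2 * ν))).const_mul s).add
    (((ht2.const_mul (s ^ 2 * ν)).div_const α).mul_const z) |>.add_const e
  have hdenom := ((ht2.const_mul (s ^ 2 * ν)).div_const α).const_sub 1
  refine (hnum.div hdenom hden).congr_deriv ?_
  simp only [Pi.add_apply, id_eq]
  refine div_eq_zero_iff.mpr (Or.inl ?_)
  field_simp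
  linear_combination (2 * s ^ 2 * ν * α) * hfix

theorem stmt_15_general (s ζ η ν : ℝ) (hs : 0 < s)
    (hν : ν ∈ Set.Ioc (0 : ℝ) 1)
    (hpos : 0 < (ζ ^ 2 + η ^ 2) / ν + s * (1 - ν) / ν) :
    ∀ α > 0,
      HasDerivAt
        (fun lam : ℝ =>
          (s * (1 - 2 * s * ν * Sfun s α ν lam + s ^ 2 * ν * Sfun s α ν lam ^ 2)
              + gammaFun s α ν lam * ζ ^ 2 + η ^ 2) / (1 - gammaFun s α ν lam))
        0 ((ζ ^ 2 + η ^ 2) / ν + s * (1 - ν) / ν) := by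
  intro α hα
  have hν0 := hν.1
  set L := (ζ ^ 2 + η ^ 2) / ν + s * (1 - ν) / ν with hL
  have hνL : ν * L = ζ ^ 2 + η ^ 2 + s * (1 - ν) := by
    rw [hL]
    field_simp
  have hfix : Sfun s α ν L * (ζ ^ 2 + η ^ 2 + s) - s ^ 2 * ν * Sfun s α ν L ^ 2 - α
      + α * s * Sfun s α ν L = 0 := by
    linear_combination Sfun_fixedPoint hs hα hν0 hpos - Sfun s α ν L * hνL
  have hden : 1 - s ^ 2 * ν * Sfun s α ν L ^ 2 / α ≠ 0 :=
    (sub_pos.mpr (gammaFun_lt_one hs hα hν0 hpos)).ne'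
  have hS := (differentiableAt_Sfun hs hα hν0 hpos).hasDerivAt
  exact ((hasDerivAt_error_zero hα.ne' hden hfix).comp L hS).congr_deriv (zero_mul _)

/-- The locally optimal regularization `λ* = (ζ² + η²)/ν + s(1 − ν)/ν` for isotropic data
(`c = 0`, `ω = 0`, data scale `s`): the derivative of the diagonal generalization error with
respect to `λ` vanishes at `λ = λ*`, for every sample ratio `α > 0`; in particular `λ*` is
independent of `α`. -/
theorem stmt_15 (s ζ η ν : ℝ) (hs : 0 < s) (hζ : 0 ≤ ζ) (hη : 0 ≤ η)
    (hν : ν ∈ Set.Ioc (0 : ℝ) 1)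
    (hpos : 0 < (ζ ^ 2 + η ^ 2) / ν + s * (1 - ν) / ν) :
    ∀ α > 0,
      HasDerivAt
        (fun lam : ℝ =>
          (s * (1 - 2 * s * ν * Sfun s α ν lam + s ^ 2 * ν * Sfun s α ν lam ^ 2)
              + gammaFun s α ν lam * ζ ^ 2 + η ^ 2) / (1 - gammaFun s α ν lam))
        0 ((ζ ^ 2 + η ^ 2) / ν + s * (1 - ν) / ν) :=
  stmt_15_general s ζ η ν hs hν hpos
end

section
/- Fix s > 0, λ > 0, ζ ≥ 0, η ≥ 0, k ∈ ℕ with k ≥ 1, and subsampling fractions ν₁, …, ν_k ∈ (0,1]. For α > 0 and r = 1,…,k define X_r(α) = sqrt((sα − sν_r + λν_r)² + 4sλν_r²), q̂_r(α) = (X_r(α) + sα − (s + λ)ν_r)/(2sλ), S_r(α) = q̂_r(α)/(ν_r + s·q̂_r(α)), γ_r(α) = s²ν_rS_r(α)²/α, and the ensemble generalization error E_g(α) = (1/k²)·[ Σ_{r=1}^k (s(1 − 2sν_rS_r(α) + s²ν_rS_r(α)²) + γ_r(α)ζ² + η²)/(1 − γ_r(α)) + Σ_{r ≠ r'} s(1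 − sν_rS_r(α) − sν_{r'}S_{r'}(α)) ]. Then E_g(α) → s·(1 − (2 − 1/k)·(1/k)Σ_{r=1}^k ν_r) + η²/k as α → ∞. In particular, in the infinite-data limit the error depends on the subsampling fractions only through their mean. -/
/-!
As `α → ∞` the conjugate order parameter `q̂_r` diverges, so `S_r = q̂_r/(ν_r + s q̂_r) → 1/s`
and `γ_r = s²ν_r S_r²/α → 0`. Each diagonal term then tends to `s(1 - ν_r) + η²` and each
off-diagonal one to `s(1 - ν_r - ν_{r'})`; summing over the `k` diagonal and `k(k-1)` ordered
off-diagonal pairs gives `s k² - s(2k - 1) Σ ν_r + k η²`.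
-/

open Filter Topology Finset

theorem tendsto_qhatFun_atTop {s lam : ℝ} (hs : 0 < s) (hlam : 0 < lam) (ν : ℝ) :
    Tendsto (fun α => qhatFun s α ν lam) atTop atTop := by
  have hlin : Tendsto (fun α : ℝ => (s * α - (s + lam) * ν) / (2 * s * lam)) atTop atTop :=
    (tendsto_atTop_add_const_right _ _ (tendsto_id.const_mul_atTop hs)).atTop_div_const
      (by positivity)
  refine tendsto_atTop_mono (fun α => ?_) hlin
  unfold qhatFun
  have := Real.sqrt_nonneg ((s * α - s * ν + lam * ν) ^ 2 + 4 * s * lam * ν ^ 2)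
  gcongr
  linarith

theorem tendsto_div_add_mul_atTop {s : ℝ} (hs : s ≠ 0) (ν : ℝ) :
    Tendsto (fun q : ℝ => q / (ν + s * q)) atTop (𝓝 s⁻¹) := by
  have h : Tendsto (fun q : ℝ => (ν * q⁻¹ + s)⁻¹) atTop (𝓝 s⁻¹) := by
    refine Tendsto.inv₀ ?_ hs
    simpa using (tendsto_inv_atTop_zero.const_mul ν).add_const s
  refine h.congr' ?_
  filter_upwards [eventually_ne_atTop 0] with q hq
  rw [← div_eq_mul_inv, div_add' _ _ _ hq, inv_div]

theorem tendsto_Sfun_atTop {s lam : ℝ} (hs : 0 < s) (hlam : 0 < lam) (ν : ℝ) :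
    Tendsto (fun α => Sfun s α ν lam) atTop (𝓝 s⁻¹) :=
  (tendsto_div_add_mul_atTop hs.ne' ν).comp (tendsto_qhatFun_atTop hs hlam ν)

theorem tendsto_gammaFun_atTop {s lam : ℝ} (hs : 0 < s) (hlam : 0 < lam) (ν : ℝ) :
    Tendsto (fun α => gammaFun s α ν lam) atTop (𝓝 0) :=
  (((tendsto_Sfun_atTop hs hlam ν).pow 2).const_mul (s ^ 2 * ν)).div_atTop tendsto_id

theorem sum_sum_ite_ne {ι M : Type*} [Fintype ι] [DecidableEq ι] [AddCommGroup M]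
    (f : ι → ι → M) :
    ∑ r, ∑ r', (if r ≠ r' then f r r' else 0) = ∑ r, ∑ r', f r r' - ∑ r, f r r := by
  rw [← sum_sub_distrib]
  refine sum_congr rfl fun r _ => ?_
  rw [← sum_filter, filter_ne, sum_erase_eq_sub (mem_univ r)]

theorem ensemble_limit_eq (s η : ℝ) {k : ℕ} (hk : k ≠ 0) (ν : Fin k → ℝ) :
    (1 / (k : ℝ) ^ 2) * ((∑ r, (s * (1 - ν r) + η ^ 2)) +
        ∑ r, ∑ r', if r ≠ r' then s * (1 - ν r - ν r') else 0) =
      s * (1 - (2 - 1 / (k : ℝ)) * ((1 / (k : ℝ)) * ∑ r, ν r)) + η ^ 2 / (k : ℝ) := by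
  rw [sum_sum_ite_ne]
  simp only [mul_sub, mul_one, sum_add_distrib, sum_sub_distrib, sum_const, card_univ,
    Fintype.card_fin, nsmul_eq_mul, ← mul_sum]
  field_simp
  ring

theorem tendsto_diag_term {s lam : ℝ} (hs : 0 < s) (hlam : 0 < lam) (ζ η ν : ℝ) :
    Tendsto (fun α => (s * (1 - 2 * s * ν * Sfun s α ν lam + s ^ 2 * ν * Sfun s α ν lam ^ 2)
        + gammaFun s α ν lam * ζ ^ 2 + η ^ 2) / (1 - gammaFun s α ν lam))
      atTop (𝓝 (s * (1 - ν) + η ^ 2)) := by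
  have hS := tendsto_Sfun_atTop hs hlam ν
  have hγ := tendsto_gammaFun_atTop hs hlam ν
  have h := (((((hS.const_mul (2 * s * ν)).const_sub 1).add
      ((hS.pow 2).const_mul (s ^ 2 * ν))).const_mul s).add (hγ.mul_const (ζ ^ 2))).add_const
      (η ^ 2) |>.div (hγ.const_sub 1) (by norm_num)
  rwa [show (s * (1 - 2 * s * ν * s⁻¹ + s ^ 2 * ν * s⁻¹ ^ 2) + 0 * ζ ^ 2 + η ^ 2) / (1 - 0)
    = s * (1 - ν) + η ^ 2 by field_simp; ring] at h

theorem tendsto_offdiag_term {s lam : ℝ} (hs : 0 < s) (hlam : 0 < lam) (ν ν' : ℝ) :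
    Tendsto (fun α => s * (1 - s * ν * Sfun s α ν lam - s * ν' * Sfun s α ν' lam))
      atTop (𝓝 (s * (1 - ν - ν'))) := by
  have h := ((((tendsto_Sfun_atTop hs hlam ν).const_mul (s * ν)).const_sub 1).sub
    ((tendsto_Sfun_atTop hs hlam ν').const_mul (s * ν'))).const_mul s
  convert h using 2
  field_simp

theorem stmt_16_general (s lam ζ η : ℝ) (hs : 0 < s) (hlam : 0 < lam)
    (k : ℕ) (hk : 1 ≤ k) (ν : Fin k → ℝ) :
    Filter.Tendsto
      (fun α : ℝ =>
        (1 / (k : ℝ) ^ 2) *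
          ((∑ r : Fin k,
              (s * (1 - 2 * s * ν r * Sfun s α (ν r) lam
                    + s ^ 2 * ν r * Sfun s α (ν r) lam ^ 2)
                  + gammaFun s α (ν r) lam * ζ ^ 2 + η ^ 2) /
                (1 - gammaFun s α (ν r) lam)) +
            ∑ r : Fin k, ∑ r' : Fin k,
              if r ≠ r' then
                s * (1 - s * ν r * Sfun s α (ν r) lam - s * ν r' * Sfun s α (ν r') lam)
              else 0))
      Filter.atTop
      (nhds (s * (1 - (2 - 1 / (k : ℝ)) * ((1 / (k : ℝ)) * ∑ r : Fin k, ν r))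
        + η ^ 2 / (k : ℝ))) := by
  rw [← ensemble_limit_eq s η (Nat.one_le_iff_ne_zero.mp hk) ν]
  refine (Tendsto.add ?_ ?_).const_mul _
  · exact tendsto_finsetSum _ fun r _ => tendsto_diag_term hs hlam ζ η (ν r)
  · refine tendsto_finsetSum _ fun r _ => tendsto_finsetSum _ fun r' _ => ?_
    split_ifs
    · exact tendsto_offdiag_term hs hlam (ν r) (ν r')
    · exact tendsto_const_nhds

/-- Infinite-data limit of the generalization error of an ensemble of `k` ridge-trained
linear predictors with mutually exclusive feature subsets on isotropic data: as `α → ∞`,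
`E_g(α) → s(1 − (2 − 1/k)·(mean of ν_r)) + η²/k`, depending on the subsampling fractions
only through their mean. -/
theorem stmt_16 (s lam ζ η : ℝ) (hs : 0 < s) (hlam : 0 < lam) (hζ : 0 ≤ ζ) (hη : 0 ≤ η)
    (k : ℕ) (hk : 1 ≤ k) (ν : Fin k → ℝ) (hν : ∀ r, ν r ∈ Set.Ioc (0 : ℝ) 1) :
    Filter.Tendsto
      (fun α : ℝ =>
        (1 / (k : ℝ) ^ 2) *
          ((∑ r : Fin k,
              (s * (1 - 2 * s * ν r * Sfun s α (ν r) lam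
                    + s ^ 2 * ν r * Sfun s α (ν r) lam ^ 2)
                  + gammaFun s α (ν r) lam * ζ ^ 2 + η ^ 2) /
                (1 - gammaFun s α (ν r) lam)) +
            ∑ r : Fin k, ∑ r' : Fin k,
              if r ≠ r' then
                s * (1 - s * ν r * Sfun s α (ν r) lam - s * ν r' * Sfun s α (ν r') lam)
              else 0))
      Filter.atTop
      (nhds (s * (1 - (2 - 1 / (k : ℝ)) * ((1 / (k : ℝ)) * ∑ r : Fin k, ν r))
        + η ^ 2 / (k : ℝ))) :=
  stmt_16_general s lam ζ η hs hlam k hk ν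
end
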